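/- arXiv:2109.04860 — 2 statements merged into one kernel-verified Lean document; each statement's English description precedes it below -/
import Mathlib

section
/- Let (S, Σ, μ) be a measure space, let 0 < p < 2, and let f, g : S → [0,∞] be measurable. Suppose there is C₀ > 0 such that for every λ > 0, μ({x : f(x) > λ}) ≤ C₀ μ({x : g(x) > λ}) + C₀ λ^{−2} ∫_{{g ≤ λ}} g² dμ. Then ∫_S f^p dμ ≤ (2C₀/(2−p)) ∫_S g^p dμ. -/
/-!
Integrate the distributional inequality against `p λ^(p-1) dλ` over `(0, ∞)`. By the layer-cake
formula the left side becomes `∫ f^p` and the first term on the right `C₀ ∫ g^p`. In the second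
term Tonelli gives
`∫₀^∞ λ^(p-3) ∫_{g ≤ λ} g² dμ dλ = ∫ g² (∫_g^∞ λ^(p-3) dλ) dμ = ∫ g^p dμ / (2-p)`,
the inner integral converging because `p < 2`. Since `μ` need not be σ-finite, Tonelli is applied
to the finite measure `g^p dμ` instead (when `∫ g^p < ∞`). Finally `1 + p/(2-p) = 2/(2-p)`.
-/

open MeasureTheory Set
open scoped ENNReal

lemma lintegral_Ioi_zero_ofReal_rpow_eq_top (s : ℝ) :
    ∫⁻ t in Ioi (0 : ℝ), ENNReal.ofReal (t ^ s) = ∞ := by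
  by_contra h
  refine not_integrableOn_Ioi_rpow s ((lintegral_ofReal_ne_top_iff_integrable ?_ ?_).1 h)
  · exact (measurable_id.pow_const s).aestronglyMeasurable
  · filter_upwards [ae_restrict_mem measurableSet_Ioi] with t ht
    exact Real.rpow_nonneg ht.le s

lemma lintegral_Ici_ofReal_rpow {s c : ℝ} (hs : s < -1) (hc : 0 < c) :
    ∫⁻ t in Ici c, ENNReal.ofReal (t ^ s) = ENNReal.ofReal (-c ^ (s + 1) / (s + 1)) := by
  rw [← restrict_Ioi_eq_restrict_Ici, ← integral_Ioi_rpow_of_lt hs hc,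
    ofReal_integral_eq_lintegral_ofReal ((integrableOn_Ioi_rpow_iff hc).2 hs)]
  filter_upwards [ae_restrict_mem measurableSet_Ioi] with t ht
  exact Real.rpow_nonneg (hc.trans ht).le s

lemma ENNReal.ofReal_inv_sq_mul_ofReal_rpow {t : ℝ} (ht : 0 < t) (p : ℝ) :
    (ENNReal.ofReal t)⁻¹ ^ 2 * ENNReal.ofReal (t ^ (p - 1)) = ENNReal.ofReal (t ^ (p - 3)) := by
  rw [← ENNReal.ofReal_inv_of_pos ht, ← ENNReal.ofReal_pow (inv_nonneg.2 ht.le),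
    ← ENNReal.ofReal_mul (by positivity), show p - 3 = p - 1 - 2 by ring,
    Real.rpow_sub ht (p - 1) 2, Real.rpow_two, inv_pow, inv_mul_eq_div]

section LayerCake

variable {S : Type*} [MeasurableSpace S] {μ : Measure S} {f : S → ℝ≥0∞} {p : ℝ}

lemma ENNReal.lintegral_rpow_eq_lintegral_meas_lt_mul_of_ae_ne_top (hf : AEMeasurable f μ)
    (hf_fin : ∀ᵐ x ∂μ, f x ≠ ∞) (hp : 0 < p) :
    ∫⁻ x, f x ^ p ∂μ = ENNReal.ofReal p *
      ∫⁻ t in Ioi 0, μ {x | ENNReal.ofReal t < f x} * ENNReal.ofReal (t ^ (p - 1)) := by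
  have hf_real : ∫⁻ x, f x ^ p ∂μ = ∫⁻ x, ENNReal.ofReal ((f x).toReal ^ p) ∂μ := by
    refine lintegral_congr_ae ?_
    filter_upwards [hf_fin] with x hx
    rw [← ENNReal.ofReal_rpow_of_nonneg ENNReal.toReal_nonneg hp.le, ENNReal.ofReal_toReal hx]
  rw [hf_real, MeasureTheory.lintegral_rpow_eq_lintegral_meas_lt_mul μ
    (ae_of_all _ fun x => ENNReal.toReal_nonneg) hf.ennreal_toReal hp]
  congr 1
  refine setLIntegral_congr_fun measurableSet_Ioi fun t ht => ?_
  congr 1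
  refine measure_congr ?_
  filter_upwards [hf_fin] with x hx
  exact propext (ENNReal.ofReal_lt_iff_lt_toReal ht.le hx).symm

lemma ENNReal.lintegral_rpow_eq_lintegral_meas_lt_mul (hf : AEMeasurable f μ) (hp : 0 < p) :
    ∫⁻ x, f x ^ p ∂μ = ENNReal.ofReal p *
      ∫⁻ t in Ioi 0, μ {x | ENNReal.ofReal t < f x} * ENNReal.ofReal (t ^ (p - 1)) := by
  by_cases hf_fin : ∀ᵐ x ∂μ, f x ≠ ∞
  · exact lintegral_rpow_eq_lintegral_meas_lt_mul_of_ae_ne_top hf hf_fin hp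
  have hμ : μ {x | f x = ∞} ≠ 0 := by simpa [ae_iff] using hf_fin
  have hlhs : ∫⁻ x, f x ^ p ∂μ = ∞ := by
    refine lintegral_eq_top_of_measure_eq_top_ne_zero (hf.pow_const p) ?_
    simpa [ENNReal.rpow_eq_top_iff_of_pos hp] using hμ
  have hrhs : ∫⁻ t in Ioi 0, μ {x | ENNReal.ofReal t < f x} * ENNReal.ofReal (t ^ (p - 1)) = ∞ := by
    refine top_le_iff.1 ?_
    calc ∞ = μ {x | f x = ∞} * ∫⁻ t in Ioi (0 : ℝ), ENNReal.ofReal (t ^ (p - 1)) := by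
          rw [lintegral_Ioi_zero_ofReal_rpow_eq_top, ENNReal.mul_top hμ]
      _ ≤ _ := (lintegral_const_mul_le _ _).trans <| lintegral_mono fun t => by
          gcongr 1
          exact measure_mono fun x (hx : f x = ∞) => by simp [hx]
  rw [hlhs, hrhs, ENNReal.mul_top (by simpa using hp)]

end LayerCake

lemma lintegral_Ioi_ofReal_rpow_mul_ite_le {p : ℝ} (hp : p < 2) (a : ℝ≥0∞) :
    ∫⁻ t in Ioi (0 : ℝ),
        ENNReal.ofReal (t ^ (p - 3)) * (if a ≤ ENNReal.ofReal t then a ^ (2 - p) else 0) ≤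
      ENNReal.ofReal (2 - p)⁻¹ := by
  rcases eq_or_ne a ∞ with rfl | ha_top
  · simp
  rcases eq_or_ne a 0 with rfl | ha0
  · simp [ENNReal.zero_rpow_of_pos (sub_pos.2 hp)]
  obtain ⟨c, hc, rfl⟩ : ∃ c : ℝ, 0 < c ∧ ENNReal.ofReal c = a :=
    ⟨a.toReal, ENNReal.toReal_pos ha0 ha_top, ENNReal.ofReal_toReal ha_top⟩
  have hite : (fun t : ℝ => ENNReal.ofReal (t ^ (p - 3)) *
      if ENNReal.ofReal c ≤ ENNReal.ofReal t then ENNReal.ofReal c ^ (2 - p) else 0) =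
      (Ici c).indicator fun t => ENNReal.ofReal (t ^ (p - 3)) * ENNReal.ofReal c ^ (2 - p) := by
    ext t
    simp [indicator, ENNReal.ofReal_le_ofReal_iff', hc.not_ge]
  have hcancel : c ^ (p - 2) * c ^ (2 - p) = 1 := by
    rw [← Real.rpow_add hc]
    simp
  calc _ ≤ ∫⁻ t, ENNReal.ofReal (t ^ (p - 3)) *
          (if ENNReal.ofReal c ≤ ENNReal.ofReal t then ENNReal.ofReal c ^ (2 - p) else 0) :=
        setLIntegral_le_lintegral _ _
    _ = (∫⁻ t in Ici c, ENNReal.ofReal (t ^ (p - 3))) * ENNReal.ofReal c ^ (2 - p) := by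
        rw [hite, lintegral_indicator measurableSet_Ici, lintegral_mul_const' _ _
          (ENNReal.rpow_ne_top_of_nonneg (by linarith) ENNReal.ofReal_ne_top)]
    _ = ENNReal.ofReal (c ^ (p - 2) / (2 - p)) * ENNReal.ofReal (c ^ (2 - p)) := by
        rw [lintegral_Ici_ofReal_rpow (by linarith) hc, ENNReal.ofReal_rpow_of_pos hc,
          show p - 3 + 1 = p - 2 by ring, neg_div, ← div_neg, neg_sub]
    _ = ENNReal.ofReal (2 - p)⁻¹ := by
        rw [← ENNReal.ofReal_mul (div_nonneg (by positivity) (sub_pos.2 hp).le),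
          div_mul_eq_mul_div, hcancel, one_div]

lemma measurable_meas_ofReal_lt {S : Type*} [MeasurableSpace S] (μ : Measure S)
    (g : S → ℝ≥0∞) : Measurable fun t : ℝ => μ {x | ENNReal.ofReal t < g x} :=
  Antitone.measurable fun _ _ hst =>
    measure_mono fun _ hx => (ENNReal.ofReal_le_ofReal hst).trans_lt hx

section SecondMoment

variable {S : Type*} [MeasurableSpace S] {μ : Measure S} {g : S → ℝ≥0∞} {p : ℝ}

lemma setLIntegral_sq_eq_lintegral_withDensity_rpow (hg : Measurable g) (hp : 0 < p)
    (hp2 : p < 2) (T : ℝ≥0∞) :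
    ∫⁻ x in {x | g x ≤ T}, g x ^ 2 ∂μ =
      ∫⁻ x, (if g x ≤ T then g x ^ (2 - p) else 0) ∂μ.withDensity (fun x => g x ^ p) := by
  rw [lintegral_withDensity_eq_lintegral_mul _ (hg.pow_const p)
    (Measurable.ite (measurableSet_le hg measurable_const) (hg.pow_const _) measurable_const),
    ← lintegral_indicator (measurableSet_le hg measurable_const)]
  refine lintegral_congr fun x => ?_
  by_cases hx : g x ≤ T
  · simp only [indicator_of_mem (show x ∈ {x | g x ≤ T} from hx), if_pos hx, Pi.mul_apply]
    rw [← ENNReal.rpow_add_of_nonneg _ _ hp.le (sub_pos.2 hp2).le, add_sub_cancel,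
      ENNReal.rpow_two]
  · simp [hx]

lemma lintegral_Ioi_ofReal_rpow_mul_setLIntegral_sq_le (hg : Measurable g) (hp : 0 < p)
    (hp2 : p < 2) :
    ∫⁻ t in Ioi (0 : ℝ), ENNReal.ofReal (t ^ (p - 3)) *
        ∫⁻ x in {x | g x ≤ ENNReal.ofReal t}, g x ^ 2 ∂μ ≤
      ENNReal.ofReal (2 - p)⁻¹ * ∫⁻ x, g x ^ p ∂μ := by
  by_cases hG : ∫⁻ x, g x ^ p ∂μ = ∞
  · rw [hG, ENNReal.mul_top (by simpa using hp2)]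
    exact le_top
  set ν := μ.withDensity fun x => g x ^ p
  have : IsFiniteMeasure ν := isFiniteMeasure_withDensity hG
  have hF : Measurable fun q : ℝ × S => ENNReal.ofReal (q.1 ^ (p - 3)) *
      (if g q.2 ≤ ENNReal.ofReal q.1 then g q.2 ^ (2 - p) else 0) :=
    (measurable_fst.pow_const _).ennreal_ofReal.mul <| Measurable.ite
      (measurableSet_le (hg.comp measurable_snd) measurable_fst.ennreal_ofReal)
      ((hg.comp measurable_snd).pow_const _) measurable_const
  calc _ = ∫⁻ t in Ioi (0 : ℝ), ∫⁻ x, ENNReal.ofReal (t ^ (p - 3)) *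
          (if g x ≤ ENNReal.ofReal t then g x ^ (2 - p) else 0) ∂ν :=
        lintegral_congr fun t => by
          rw [setLIntegral_sq_eq_lintegral_withDensity_rpow hg hp hp2,
            lintegral_const_mul' _ _ ENNReal.ofReal_ne_top]
    _ = ∫⁻ x, (∫⁻ t in Ioi (0 : ℝ), ENNReal.ofReal (t ^ (p - 3)) *
          (if g x ≤ ENNReal.ofReal t then g x ^ (2 - p) else 0)) ∂ν :=
        lintegral_lintegral_swap hF.aemeasurable
    _ ≤ ∫⁻ _, ENNReal.ofReal (2 - p)⁻¹ ∂ν :=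
        lintegral_mono fun x => lintegral_Ioi_ofReal_rpow_mul_ite_le hp2 (g x)
    _ = ENNReal.ofReal (2 - p)⁻¹ * ∫⁻ x, g x ^ p ∂μ := by
        rw [lintegral_const, withDensity_apply _ MeasurableSet.univ, Measure.restrict_univ]

lemma lintegral_Ioi_distribution_bound_le (hg : Measurable g) (hp : 0 < p) (hp2 : p < 2)
    (C : ℝ≥0∞) :
    ENNReal.ofReal p * ∫⁻ t in Ioi 0, (C * μ {x | ENNReal.ofReal t < g x} +
        C * (ENNReal.ofReal t)⁻¹ ^ 2 * ∫⁻ x in {x | g x ≤ ENNReal.ofReal t}, g x ^ 2 ∂μ) *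
          ENNReal.ofReal (t ^ (p - 1)) ≤
      (C + C * ENNReal.ofReal p * ENNReal.ofReal (2 - p)⁻¹) * ∫⁻ x, g x ^ p ∂μ := by
  have htail : Measurable fun t : ℝ =>
      μ {x | ENNReal.ofReal t < g x} * ENNReal.ofReal (t ^ (p - 1)) :=
    (measurable_meas_ofReal_lt μ g).mul (measurable_id.pow_const _).ennreal_ofReal
  have hmoment : Measurable fun t : ℝ => ENNReal.ofReal (t ^ (p - 3)) *
      ∫⁻ x in {x | g x ≤ ENNReal.ofReal t}, g x ^ 2 ∂μ :=
    (measurable_id.pow_const _).ennreal_ofReal.mul <| Monotone.measurable fun _ _ hst =>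
      lintegral_mono_set fun _ hx => le_trans hx (ENNReal.ofReal_le_ofReal hst)
  have hG := (ENNReal.lintegral_rpow_eq_lintegral_meas_lt_mul hg.aemeasurable hp (μ := μ)).symm
  calc _ = ENNReal.ofReal p *
        (C * (∫⁻ t in Ioi 0, μ {x | ENNReal.ofReal t < g x} * ENNReal.ofReal (t ^ (p - 1))) +
          C * ∫⁻ t in Ioi 0, ENNReal.ofReal (t ^ (p - 3)) *
            ∫⁻ x in {x | g x ≤ ENNReal.ofReal t}, g x ^ 2 ∂μ) := by
        rw [← lintegral_const_mul _ htail, ← lintegral_const_mul _ hmoment,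
          ← lintegral_add_left (htail.const_mul _)]
        congr 1
        refine setLIntegral_congr_fun measurableSet_Ioi fun t ht => ?_
        rw [← ENNReal.ofReal_inv_sq_mul_ofReal_rpow ht]
        ring
    _ ≤ ENNReal.ofReal p *
        (C * (∫⁻ t in Ioi 0, μ {x | ENNReal.ofReal t < g x} * ENNReal.ofReal (t ^ (p - 1))) +
          C * (ENNReal.ofReal (2 - p)⁻¹ * ∫⁻ x, g x ^ p ∂μ)) := by
        grw [lintegral_Ioi_ofReal_rpow_mul_setLIntegral_sq_le hg hp hp2]
    _ = _ := by
        rw [← hG]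
        ring

end SecondMoment

/-- the distributional-inequality-to-`L^p` implication for `0 < p < 2`:
if `μ({f > λ}) ≤ C₀ μ({g > λ}) + C₀ λ⁻² ∫_{{g ≤ λ}} g² dμ` for every `λ > 0`, then
`∫ f^p dμ ≤ (2C₀/(2-p)) ∫ g^p dμ`. -/
theorem statement16 {S : Type*} [MeasurableSpace S] (μ : Measure S)
    (p : ℝ) (hp : 0 < p) (hp2 : p < 2)
    (f g : S → ℝ≥0∞) (hf : Measurable f) (hg : Measurable g)
    (C₀ : ℝ) (hC₀ : 0 < C₀)
    (hdist : ∀ l : ℝ, 0 < l →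
      μ {x | ENNReal.ofReal l < f x} ≤
        ENNReal.ofReal C₀ * μ {x | ENNReal.ofReal l < g x} +
          ENNReal.ofReal C₀ * (ENNReal.ofReal l)⁻¹ ^ 2 *
            ∫⁻ x in {x | g x ≤ ENNReal.ofReal l}, g x ^ 2 ∂μ) :
    ∫⁻ x, f x ^ p ∂μ ≤ ENNReal.ofReal (2 * C₀ / (2 - p)) * ∫⁻ x, g x ^ p ∂μ := by
  calc ∫⁻ x, f x ^ p ∂μ = ENNReal.ofReal p *
        ∫⁻ t in Ioi 0, μ {x | ENNReal.ofReal t < f x} * ENNReal.ofReal (t ^ (p - 1)) :=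
        ENNReal.lintegral_rpow_eq_lintegral_meas_lt_mul hf.aemeasurable hp
    _ ≤ ENNReal.ofReal p * ∫⁻ t in Ioi 0, (ENNReal.ofReal C₀ * μ {x | ENNReal.ofReal t < g x} +
          ENNReal.ofReal C₀ * (ENNReal.ofReal t)⁻¹ ^ 2 *
            ∫⁻ x in {x | g x ≤ ENNReal.ofReal t}, g x ^ 2 ∂μ) * ENNReal.ofReal (t ^ (p - 1)) := by
        gcongr 1
        exact setLIntegral_mono' measurableSet_Ioi fun t ht => by grw [hdist t ht]
    _ ≤ (ENNReal.ofReal C₀ + ENNReal.ofReal C₀ * ENNReal.ofReal p * ENNReal.ofReal (2 - p)⁻¹) *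
          ∫⁻ x, g x ^ p ∂μ :=
        lintegral_Ioi_distribution_bound_le hg hp hp2 _
    _ = ENNReal.ofReal (2 * C₀ / (2 - p)) * ∫⁻ x, g x ^ p ∂μ := by
        have h2p : 0 < 2 - p := sub_pos.2 hp2
        rw [← ENNReal.ofReal_mul hC₀.le, ← ENNReal.ofReal_mul (by positivity),
          ← ENNReal.ofReal_add hC₀.le (by positivity)]
        congr 2
        field_simp
        ring
end

section
/- Let ν be a Borel measure on ℝⁿ which is doubling with constant D: 0 < ν(B(x,2r)) ≤ D ν(B(x,r)) < ∞ for all x ∈ ℝⁿ and r > 0. Let m := ν ⊗ λ₁ be the product measure on the upper half-space ℝ^{n+1}_+ = ℝⁿ × (0,∞), where λ₁ is one-dimensional Lebesgue measure. Then there exists C ≥ 1, depending only on n and D, such that: (i) C^{-1} r ν(Bₙ(x,r)) ≤ m( B((x,0), r) ∩ ℝ^{n+1}_+ ) ≤ C r ν(Bₙ(x,r)) for all x ∈ ℝⁿ and r > 0; and (ii) m( B(X, 2r) ∩ ℝ^{n+1}_+ ) ≤ C m( B(X, r) ∩ ℝ^{n+1}_+ ) for all X in the closed upper half-space and all r > 0;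 in particular m is doubling up to the boundary on ℝ^{n+1}_+. -/
open Metric MeasureTheory Set
open scoped ENNReal

noncomputable section

/-- The Euclidean ball of `ℝ^{n+1} = ℝⁿ × ℝ` (the product carries the sup metric,
so we spell out the Euclidean distance on the product). -/
def upBall {n : ℕ} (X : EuclideanSpace ℝ (Fin n) × ℝ) (r : ℝ) :
    Set (EuclideanSpace ℝ (Fin n) × ℝ) :=
  {Y | Real.sqrt (dist Y.1 X.1 ^ 2 + (Y.2 - X.2) ^ 2) < r}

/-- The open upper half-space `ℝ^{n+1}_+ = ℝⁿ × (0,∞)`. -/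
def upperHalf (n : ℕ) : Set (EuclideanSpace ℝ (Fin n) × ℝ) :=
  {Y | 0 < Y.2}

lemma aux_subset1 {n : ℕ} (X : EuclideanSpace ℝ (Fin n) × ℝ) (R : ℝ) :
    upBall X R ∩ upperHalf n ⊆ ball X.1 R ×ˢ Ioo (max 0 (X.2 - R)) (X.2 + R) := by
  rintro Y ⟨hY, hpos⟩
  have hs : Real.sqrt (dist Y.1 X.1 ^ 2 + (Y.2 - X.2) ^ 2) < R := hY
  have hd : dist Y.1 X.1 < R := by
    have h1 : dist Y.1 X.1 ≤ Real.sqrt (dist Y.1 X.1 ^ 2 + (Y.2 - X.2) ^ 2) := by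
      have h2 : Real.sqrt (dist Y.1 X.1 ^ 2) ≤
          Real.sqrt (dist Y.1 X.1 ^ 2 + (Y.2 - X.2) ^ 2) :=
        Real.sqrt_le_sqrt (le_add_of_nonneg_right (sq_nonneg _))
      rwa [Real.sqrt_sq dist_nonneg] at h2
    linarith
  have he : |Y.2 - X.2| < R := by
    have h1 : |Y.2 - X.2| ≤ Real.sqrt (dist Y.1 X.1 ^ 2 + (Y.2 - X.2) ^ 2) := by
      rw [← Real.sqrt_sq_eq_abs]
      exact Real.sqrt_le_sqrt (by nlinarith [sq_nonneg (dist Y.1 X.1)])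
    linarith
  rw [abs_lt] at he
  refine ⟨mem_ball.2 hd, ?_, by linarith [he.2]⟩
  exact max_lt hpos (by linarith [he.1])

lemma aux_subset2 {n : ℕ} (X : EuclideanSpace ℝ (Fin n) × ℝ) (R : ℝ) (hR : 0 < R) :
    ball X.1 (R/2) ×ˢ Ioo (max 0 (X.2 - R/2)) (X.2 + R/2) ⊆ upBall X R ∩ upperHalf n := by
  rintro Y ⟨hd, hIoo⟩
  have hd' : dist Y.1 X.1 < R/2 := mem_ball.1 hd
  have h0 : 0 < Y.2 := lt_of_le_of_lt (le_max_left _ _) hIoo.1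
  have h1 : X.2 - R/2 < Y.2 := lt_of_le_of_lt (le_max_right _ _) hIoo.1
  have h2 : Y.2 < X.2 + R/2 := hIoo.2
  refine ⟨?_, h0⟩
  show Real.sqrt (dist Y.1 X.1 ^ 2 + (Y.2 - X.2) ^ 2) < R
  rw [show R = Real.sqrt (R ^ 2) by rw [Real.sqrt_sq hR.le]]
  apply Real.sqrt_lt_sqrt (by positivity)
  have := dist_nonneg (x := Y.1) (y := X.1)
  nlinarith

lemma len_ineq (t r : ℝ) (ht : 0 ≤ t) (hr : 0 < r) :
    t + 2*r - max 0 (t - 2*r) ≤ 4 * (t + r/2 - max 0 (t - r/2)) := by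
  rcases le_total (t - 2*r) 0 with h | h <;> rcases le_total (t - r/2) 0 with h' | h' <;>
    simp [max_eq_left, max_eq_right, h, h'] <;> linarith

/-- if `ν` is a doubling measure on `ℝⁿ` with constant `D` and
`m = ν ⊗ λ₁` on the upper half-space, then
(i) `m(B((x,0),r) ∩ ℝ^{n+1}_+) ≃ r ν(Bₙ(x,r))`, and
(ii) `m` is doubling up to the boundary on `ℝ^{n+1}_+`,
with constants depending only on `n` and `D`. -/
theorem statement17 (n : ℕ) (D : ℝ≥0∞) (hD : 1 ≤ D) (hD' : D < ∞) :
    ∃ C : ℝ≥0∞, 1 ≤ C ∧ C < ∞ ∧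
      ∀ ν : Measure (EuclideanSpace ℝ (Fin n)),
        -- ν is doubling on ℝⁿ with constant D
        (∀ (x : EuclideanSpace ℝ (Fin n)) (r : ℝ), 0 < r →
          0 < ν (ball x r) ∧ ν (ball x r) < ∞ ∧ ν (ball x (2 * r)) ≤ D * ν (ball x r)) →
        -- (i) m(B((x,0),r) ∩ ℝ^{n+1}_+) ≃ r ν(Bₙ(x,r))
        (∀ (x : EuclideanSpace ℝ (Fin n)) (r : ℝ), 0 < r →
          C⁻¹ * (ENNReal.ofReal r * ν (ball x r)) ≤
              (ν.prod volume) (upBall (x, 0) r ∩ upperHalf n) ∧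
            (ν.prod volume) (upBall (x, 0) r ∩ upperHalf n) ≤
              C * (ENNReal.ofReal r * ν (ball x r))) ∧
        -- (ii) doubling up to the boundary
        (∀ X : EuclideanSpace ℝ (Fin n) × ℝ, 0 ≤ X.2 → ∀ r : ℝ, 0 < r →
          (ν.prod volume) (upBall X (2 * r) ∩ upperHalf n) ≤
            C * (ν.prod volume) (upBall X r ∩ upperHalf n)) := by
  refine ⟨4 * D * D, ?_, ?_, ?_⟩
  · calc (1:ℝ≥0∞) = 1 * 1 * 1 := by simp
    _ ≤ 4 * D * D := by
        exact mul_le_mul' (mul_le_mul' (by norm_num) hD) hD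
  · exact ENNReal.mul_lt_top (ENNReal.mul_lt_top (by norm_num) hD') hD'
  intro ν hν
  have hC0 : (4 * D * D : ℝ≥0∞) ≠ 0 := by
    intro h
    rcases mul_eq_zero.1 h with h' | h'
    · rcases mul_eq_zero.1 h' with h'' | h''
      · norm_num at h''
      · exact absurd h'' (by intro h3; rw [h3] at hD; simp at hD)
    · exact absurd h' (by intro h3; rw [h3] at hD; simp at hD)
  have hCtop : (4 * D * D : ℝ≥0∞) ≠ ∞ :=
    (ENNReal.mul_lt_top (ENNReal.mul_lt_top (by norm_num) hD') hD').ne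
  -- general upper bound
  have hupper : ∀ (X : EuclideanSpace ℝ (Fin n) × ℝ) (R : ℝ),
      (ν.prod volume) (upBall X R ∩ upperHalf n) ≤
        ν (ball X.1 R) * ENNReal.ofReal (X.2 + R - max 0 (X.2 - R)) := by
    intro X R
    calc (ν.prod volume) (upBall X R ∩ upperHalf n)
        ≤ (ν.prod volume) (ball X.1 R ×ˢ Ioo (max 0 (X.2 - R)) (X.2 + R)) :=
          measure_mono (aux_subset1 X R)
      _ = ν (ball X.1 R) * ENNReal.ofReal (X.2 + R - max 0 (X.2 - R)) := by
          rw [Measure.prod_prod, Real.volume_Ioo]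
  -- general lower bound
  have hlower : ∀ (X : EuclideanSpace ℝ (Fin n) × ℝ) (R : ℝ), 0 < R →
      ν (ball X.1 (R/2)) * ENNReal.ofReal (X.2 + R/2 - max 0 (X.2 - R/2)) ≤
        (ν.prod volume) (upBall X R ∩ upperHalf n) := by
    intro X R hR
    calc ν (ball X.1 (R/2)) * ENNReal.ofReal (X.2 + R/2 - max 0 (X.2 - R/2))
        = (ν.prod volume) (ball X.1 (R/2) ×ˢ Ioo (max 0 (X.2 - R/2)) (X.2 + R/2)) := by
          rw [Measure.prod_prod, Real.volume_Ioo]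
      _ ≤ (ν.prod volume) (upBall X R ∩ upperHalf n) :=
          measure_mono (aux_subset2 X R hR)
  constructor
  · -- part (i)
    intro x r hr
    have hhalf := hν x (r/2) (by positivity)
    have hdb : ν (ball x r) ≤ D * ν (ball x (r/2)) := by
      have := (hν x (r/2) (by positivity)).2.2
      rwa [show 2 * (r/2) = r by ring] at this
    have hU := hupper (x, 0) r
    have hL := hlower (x, 0) r hr
    simp only [show ((x, 0) : EuclideanSpace ℝ (Fin n) × ℝ).2 = 0 from rfl,
      show ((x, 0) : EuclideanSpace ℝ (Fin n) × ℝ).1 = x from rfl] at hU hL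
    rw [show max 0 (0 - r) = 0 by simp [le_of_lt hr], zero_add, sub_zero] at hU
    rw [show max 0 (0 - r/2) = 0 by simp; linarith, zero_add, sub_zero] at hL
    constructor
    · -- lower bound
      have key : ENNReal.ofReal r * ν (ball x r) ≤
          (4 * D * D) * ((ν.prod volume) (upBall (x, 0) r ∩ upperHalf n)) := by
        calc ENNReal.ofReal r * ν (ball x r)
            ≤ ENNReal.ofReal r * (D * ν (ball x (r/2))) := by
              exact mul_le_mul_right hdb _
          _ = (2 * D) * (ν (ball x (r/2)) * ENNReal.ofReal (r/2)) := by
              rw [show ENNReal.ofReal r = 2 * ENNReal.ofReal (r/2) by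
                rw [← ENNReal.ofReal_ofNat, ← ENNReal.ofReal_mul (by norm_num)]
                congr 1; ring]
              ring
          _ ≤ (4 * D * D) * (ν (ball x (r/2)) * ENNReal.ofReal (r/2)) := by
              apply mul_le_mul_left
              calc (2:ℝ≥0∞) * D = 2 * 1 * D := by ring
                _ ≤ 4 * D * D := mul_le_mul' (mul_le_mul' (by norm_num) hD) le_rfl
          _ ≤ (4 * D * D) * ((ν.prod volume) (upBall (x, 0) r ∩ upperHalf n)) :=
              mul_le_mul_right hL _
      calc (4 * D * D)⁻¹ * (ENNReal.ofReal r * ν (ball x r))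
          ≤ (4 * D * D)⁻¹ * ((4 * D * D) * ((ν.prod volume) (upBall (x, 0) r ∩ upperHalf n))) :=
            mul_le_mul_right key _
        _ = ((4 * D * D)⁻¹ * (4 * D * D)) * ((ν.prod volume) (upBall (x, 0) r ∩ upperHalf n)) := by
            ring
        _ = (ν.prod volume) (upBall (x, 0) r ∩ upperHalf n) := by
            rw [ENNReal.inv_mul_cancel hC0 hCtop, one_mul]
    · -- upper bound
      calc (ν.prod volume) (upBall (x, 0) r ∩ upperHalf n)
          ≤ ν (ball x r) * ENNReal.ofReal r := hU
        _ = 1 * (ENNReal.ofReal r * ν (ball x r)) := by ring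
        _ ≤ (4 * D * D) * (ENNReal.ofReal r * ν (ball x r)) := by
            apply mul_le_mul_left
            calc (1:ℝ≥0∞) = 1 * 1 * 1 := by simp
              _ ≤ 4 * D * D := mul_le_mul' (mul_le_mul' (by norm_num) hD) hD
  · -- part (ii)
    intro X hX r hr
    set x := X.1
    set t := X.2
    have hdb1 : ν (ball x (2*r)) ≤ D * ν (ball x r) := (hν x r hr).2.2
    have hdb2 : ν (ball x r) ≤ D * ν (ball x (r/2)) := by
      have := (hν x (r/2) (by positivity)).2.2
      rwa [show 2 * (r/2) = r by ring] at this
    have hU := hupper X (2*r)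
    have hL := hlower X r hr
    have hlen : ENNReal.ofReal (t + 2*r - max 0 (t - 2*r)) ≤
        4 * ENNReal.ofReal (t + r/2 - max 0 (t - r/2)) := by
      rw [← ENNReal.ofReal_ofNat, ← ENNReal.ofReal_mul (by norm_num)]
      exact ENNReal.ofReal_le_ofReal (len_ineq t r hX hr)
    calc (ν.prod volume) (upBall X (2*r) ∩ upperHalf n)
        ≤ ν (ball x (2*r)) * ENNReal.ofReal (t + 2*r - max 0 (t - 2*r)) := hU
      _ ≤ (D * (D * ν (ball x (r/2)))) * (4 * ENNReal.ofReal (t + r/2 - max 0 (t - r/2))) :=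
          mul_le_mul' (hdb1.trans (mul_le_mul_right hdb2 D)) hlen
      _ = (4 * D * D) * (ν (ball x (r/2)) * ENNReal.ofReal (t + r/2 - max 0 (t - r/2))) := by
          ring
      _ ≤ (4 * D * D) * ((ν.prod volume) (upBall X r ∩ upperHalf n)) :=
          mul_le_mul_right hL _
end
end
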